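/- (Corollary 1.) Let ū, z, δ_h, u₁, u₂, θ be real numbers with u₂ ≤ u₁ ≤ ū, θ > 0, 0 ≤ δ_h ≤ u₁ − u₂, and set δ = u₁ − u₂. If u₁·Φ(δ/θ) + u₂·Φ(−δ/θ) + θ·φ(δ/θ) ≥ z, then θ is at least the infimum of the set {t ∈ ℝ : t > 0 and ū + t·φ(δ_h/t) ≥ z}. -/

import Mathlib

open MeasureTheory ProbabilityTheory Real

noncomputable def phi (w : ℝ) : ℝ := (1 / Real.sqrt (2 * Real.pi)) * Real.exp (-w ^ 2 / 2)

noncomputable def Phi (w : ℝ) : ℝ := ∫ u in Set.Iic w, phi u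

/-! Since `Φ(w) + Φ(-w) = 1`, the term `u₁ Φ(δ/θ) + u₂ Φ(-δ/θ)` is a convex combination of `u₁`
and `u₂`, hence at most `u₁ ≤ ū`; and `φ(δ/θ) ≤ φ(δₕ/θ)` because `0 ≤ δₕ ≤ δ`. So `θ` itself
belongs to the set, which is bounded below by `0`. -/

lemma phi_eq_gaussianPDFReal : phi = gaussianPDFReal 0 1 := by
  ext w
  simp [phi, gaussianPDFReal, div_eq_inv_mul]

lemma phi_nonneg (w : ℝ) : 0 ≤ phi w := by
  unfold phi
  positivity

lemma phi_neg (w : ℝ) : phi (-w) = phi w := by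
  simp [phi]

lemma phi_le_phi_of_sq_le {a b : ℝ} (h : a ^ 2 ≤ b ^ 2) : phi b ≤ phi a := by
  unfold phi
  gcongr

lemma Phi_nonneg (w : ℝ) : 0 ≤ Phi w :=
  setIntegral_nonneg measurableSet_Iic fun u _ => phi_nonneg u

lemma Phi_add_Phi_neg (w : ℝ) : Phi w + Phi (-w) = 1 := by
  have hint : Integrable phi := phi_eq_gaussianPDFReal ▸ integrable_gaussianPDFReal 0 1
  have hneg : Phi (-w) = ∫ u in Set.Ioi w, phi u := by
    rw [Phi, ← integral_comp_neg_Ioi]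
    simp only [phi_neg]
  rw [Phi, hneg, intervalIntegral.integral_Iic_add_Ioi hint.integrableOn hint.integrableOn,
    phi_eq_gaussianPDFReal, integral_gaussianPDFReal_eq_one 0 one_ne_zero]

lemma mul_Phi_add_mul_Phi_neg_le {u₁ u₂ : ℝ} (h : u₂ ≤ u₁) (w : ℝ) :
    u₁ * Phi w + u₂ * Phi (-w) ≤ u₁ :=
  calc u₁ * Phi w + u₂ * Phi (-w)
      ≤ u₁ * Phi w + u₁ * Phi (-w) := by gcongr; exact Phi_nonneg _
    _ = u₁ := by rw [← mul_add, Phi_add_Phi_neg, mul_one]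

theorem theta_lower_bound_interval
    (ubar z δh u₁ u₂ θ : ℝ) (h21 : u₂ ≤ u₁) (h1bar : u₁ ≤ ubar) (hθ : 0 < θ)
    (hδh0 : 0 ≤ δh) (hδh : δh ≤ u₁ - u₂)
    (hz : u₁ * Phi ((u₁ - u₂) / θ) + u₂ * Phi (-(u₁ - u₂) / θ)
            + θ * phi ((u₁ - u₂) / θ) ≥ z) :
    sInf {t : ℝ | 0 < t ∧ ubar + t * phi (δh / t) ≥ z} ≤ θ := by
  have hPhi : u₁ * Phi ((u₁ - u₂) / θ) + u₂ * Phi (-(u₁ - u₂) / θ) ≤ ubar := by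
    rw [neg_div]
    exact (mul_Phi_add_mul_Phi_neg_le h21 _).trans h1bar
  have hphi : θ * phi ((u₁ - u₂) / θ) ≤ θ * phi (δh / θ) := by
    gcongr
    exact phi_le_phi_of_sq_le (by gcongr)
  refine csInf_le ⟨0, fun t ht => ht.1.le⟩ ⟨hθ, ?_⟩
  linarith
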